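/- Let Ξ̃ ⊂ ℝ^d be open convex with int(bc_{Ξ̃}) ≠ ∅, let Ξ be open connected with x₁ + Ξ̃ ⊂ Ξ ⊂ x₀ + Ξ̃, fix ν ∈ int(bc_{Ξ̃}) and ξ ∈ ℝ^d, and for ε > 0 set E_ε(x) = e^{ε x·ν + 2πi x·ξ} χ_Ξ(x). Suppose E_ε ∈ L²(Ξ) for all small ε > 0. Then for every R > 0, the limit lim_{ε→0⁺} (e^{ε z·ν}/‖E_ε‖²) ∫ e^{2ε y·ν} χ_Ξ(z+y) χ_Ξ(y) dy = 1 holds uniformly for |z| ≤ R. -/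

import Mathlib

/-! Being a cone with nonempty interior, the characteristic cone of `Ξ̃` contains a ball
`closedBall u R`. Since `x₁ + Ξ̃ ⊆ Ξ ⊆ x₀ + Ξ̃`, translating `Ξ` by `x₂ + z` with `x₂ = x₁ - x₀ + u`
keeps it inside `Ξ` for all `‖z‖ ≤ R`. Hence `x₂ + Ξ ⊆ Ξ ∩ (Ξ - z) ⊆ Ξ`, and integrating the weight
`e^{2ε⟪y,ν⟫}` sandwiches the overlap integral between `e^{2ε⟪x₂,ν⟫} ‖E_ε‖²` and `‖E_ε‖²`, so the
ratio lies between `e^{-ε M}` and `e^{ε M}` with `M` depending only on `R`. -/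

open MeasureTheory Set Pointwise
open scoped ENNReal

noncomputable section

abbrev Ed (d : ℕ) := EuclideanSpace ℝ (Fin d)

def charCone {d : ℕ} (Ω : Set (Ed d)) : Set (Ed d) :=
  {x | ∀ t : ℝ, 0 < t → ∀ p ∈ Ω, p + t • x ∈ Ω}

def barrierCone {d : ℕ} (Ω : Set (Ed d)) : Set (Ed d) :=
  {θ | ∃ M : ℝ, ∀ p ∈ Ω, (inner ℝ p θ : ℝ) ≤ M}

open Metric Real Filter Topology

theorem exists_closedBall_subset_of_smul_mem {E : Type*} [NormedAddCommGroup E]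
    [NormedSpace ℝ E] {S : Set E} (hS : ∀ x ∈ S, ∀ a : ℝ, 0 < a → a • x ∈ S)
    (hint : (interior S).Nonempty) (R : ℝ) : ∃ u, closedBall u R ⊆ S := by
  obtain ⟨c, hc⟩ := hint
  obtain ⟨r, hr, hball⟩ := Metric.isOpen_iff.mp isOpen_interior c hc
  set a := (|R| + 1) / r
  have ha : 0 < a := by positivity
  refine ⟨a • c, fun y hy => ?_⟩
  have hy' : y ∈ ball (a • c) (‖a‖ * r) := closedBall_subset_ball (by
    rw [Real.norm_of_nonneg ha.le, div_mul_cancel₀ _ hr.ne']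
    linarith [le_abs_self R]) hy
  rw [← _root_.smul_ball ha.ne'] at hy'
  obtain ⟨x, hx, rfl⟩ := hy'
  exact hS x (interior_subset (hball hx)) a ha

section CharCone

variable {d : ℕ} {Ω Ξ : Set (Ed d)}

theorem smul_mem_charCone {x : Ed d} (hx : x ∈ charCone Ω) {a : ℝ} (ha : 0 < a) :
    a • x ∈ charCone Ω := fun t ht p hp => by
  simpa [smul_smul] using hx (t * a) (by positivity) p hp

theorem vadd_subset_of_mem_charCone {x₀ x₁ v : Ed d} (h1 : x₁ +ᵥ Ω ⊆ Ξ) (h0 : Ξ ⊆ x₀ +ᵥ Ω)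
    (hv : v ∈ charCone Ω) : (x₁ - x₀ + v) +ᵥ Ξ ⊆ Ξ := by
  rintro _ ⟨p, hp, rfl⟩
  obtain ⟨q, hq, rfl⟩ := h0 hp
  convert h1 (vadd_mem_vadd_set (by simpa using hv 1 one_pos q hq)) using 1
  simp only [vadd_eq_add]
  abel

theorem exists_vadd_subset_of_norm_le {x₀ x₁ : Ed d} (h1 : x₁ +ᵥ Ω ⊆ Ξ) (h0 : Ξ ⊆ x₀ +ᵥ Ω)
    (hcc : (interior (charCone Ω)).Nonempty) (R : ℝ) :
    ∃ x₂ : Ed d, ∀ z : Ed d, ‖z‖ ≤ R → (x₂ + z) +ᵥ Ξ ⊆ Ξ := by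
  obtain ⟨u, hu⟩ :=
    exists_closedBall_subset_of_smul_mem (fun _ hx _ ha => smul_mem_charCone hx ha) hcc R
  refine ⟨x₁ - x₀ + u, fun z hz => ?_⟩
  have huz : u + z ∈ charCone Ω := hu (by simpa [mem_closedBall, dist_eq_norm] using hz)
  simpa only [add_assoc] using vadd_subset_of_mem_charCone h1 h0 huz

end CharCone

theorem abs_sub_one_le_exp_sub_one {q η : ℝ} (hlo : exp (-η) ≤ q) (hhi : q ≤ exp η) :
    |q - 1| ≤ exp η - 1 := by
  have h₁ := add_one_le_exp (-η)
  have h₂ := add_one_le_exp η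
  rw [abs_le]
  constructor <;> linarith

theorem abs_exp_div_mul_sub_one_le {a b I J : ℝ} (hI : 0 < I) (hJI : J ≤ I)
    (hIJ : exp b * I ≤ J) : |exp a / I * J - 1| ≤ exp (|a| + |b|) - 1 := by
  rw [show exp a / I * J = exp a * (J / I) by ring]
  apply abs_sub_one_le_exp_sub_one
  · calc exp (-(|a| + |b|)) ≤ exp a * exp b := by
          rw [← exp_add]; exact exp_le_exp.mpr (by linarith [neg_abs_le a, neg_abs_le b])
      _ ≤ exp a * (J / I) := by gcongr; rwa [le_div_iff₀ hI]
  · calc exp a * (J / I) ≤ exp a := mul_le_of_le_one_right (exp_pos a).le ((div_le_one hI).mpr hJI)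
      _ ≤ exp (|a| + |b|) := exp_le_exp.mpr (by linarith [le_abs_self a, abs_nonneg b])

theorem exists_pos_forall_exp_mul_sub_one_lt (M : ℝ) {δ : ℝ} (hδ : 0 < δ) :
    ∃ ε₀ > 0, ∀ ε : ℝ, 0 < ε → ε < ε₀ → exp (ε * M) - 1 < δ := by
  have hcont : Tendsto (fun ε : ℝ => exp (ε * M) - 1) (𝓝 0) (𝓝 0) := by
    simpa using (show Continuous (fun ε : ℝ => exp (ε * M) - 1) by fun_prop).tendsto 0
  obtain ⟨ε₀, hε₀, h⟩ := Metric.tendsto_nhds_nhds.mp hcont δ hδ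
  refine ⟨ε₀, hε₀, fun ε hε hεε₀ => ?_⟩
  have hclose := h (by rwa [dist_zero_right, Real.norm_of_nonneg hε.le])
  rw [dist_zero_right] at hclose
  exact (le_abs_self _).trans_lt hclose

section ExpWeight

variable {E : Type*} [NormedAddCommGroup E] [InnerProductSpace ℝ E] [MeasurableSpace E]
  [BorelSpace E] {μ : Measure E} [μ.IsAddLeftInvariant]

theorem setIntegral_vadd_exp_inner (x ν : E) (c : ℝ) (s : Set E) :
    ∫ y in x +ᵥ s, exp (c * inner ℝ y ν) ∂μ =
      exp (c * inner ℝ x ν) * ∫ y in s, exp (c * inner ℝ y ν) ∂μ := by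
  rw [← image_vadd, (measurePreserving_vadd x μ).setIntegral_image_emb
    (measurableEmbedding_const_vadd x), ← integral_const_mul]
  simp only [vadd_eq_add, inner_add_left, mul_add, exp_add]

theorem abs_overlap_ratio_sub_one_le [μ.IsOpenPosMeasure] {Ξ : Set E} (hΞo : IsOpen Ξ)
    (hne : Ξ.Nonempty) {x z ν : E} {ε : ℝ}
    (hint : IntegrableOn (fun y => exp (2 * ε * inner ℝ y ν)) Ξ μ)
    (hx : x +ᵥ Ξ ⊆ Ξ) (hxz : (x + z) +ᵥ Ξ ⊆ Ξ) :
    |exp (ε * inner ℝ z ν) / (∫ y in Ξ, exp (2 * ε * inner ℝ y ν) ∂μ) *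
        (∫ y in {y | y ∈ Ξ ∧ z + y ∈ Ξ}, exp (2 * ε * inner ℝ y ν) ∂μ) - 1|
      ≤ exp (|ε * inner ℝ z ν| + |2 * ε * inner ℝ x ν|) - 1 := by
  have hpos : 0 < ∫ y in Ξ, exp (2 * ε * inner ℝ y ν) ∂μ := by
    have : NeZero (μ.restrict Ξ) := ⟨by simpa using (hΞo.measure_pos μ hne).ne'⟩
    exact integral_exp_pos hint
  have hoverlap : x +ᵥ Ξ ⊆ {y | y ∈ Ξ ∧ z + y ∈ Ξ} := by
    rintro _ ⟨p, hp, rfl⟩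
    refine ⟨hx (vadd_mem_vadd_set hp), ?_⟩
    simpa [vadd_eq_add, add_left_comm, add_assoc] using hxz (vadd_mem_vadd_set hp)
  have hnonneg : ∀ s : Set E, 0 ≤ᵐ[μ.restrict s] fun y => exp (2 * ε * inner ℝ y ν) :=
    fun _ => ae_of_all _ fun _ => (exp_pos _).le
  apply abs_exp_div_mul_sub_one_le hpos
  · exact setIntegral_mono_set hint (hnonneg Ξ) (Eventually.of_forall fun _ hy => hy.1)
  · rw [← setIntegral_vadd_exp_inner]
    exact setIntegral_mono_set (hint.mono_set fun _ hy => hy.1) (hnonneg _)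
      hoverlap.eventuallyLE

end ExpWeight

theorem stmt18_general {d : ℕ} (Ξt Ξ : Set (Ed d))
    (hcc : (interior (charCone Ξt)).Nonempty)
    (hΞo : IsOpen Ξ) (hΞc : IsConnected Ξ)
    (x₀ x₁ : Ed d) (h1 : x₁ +ᵥ Ξt ⊆ Ξ) (h0 : Ξ ⊆ x₀ +ᵥ Ξt)
    (ν : Ed d)
    (hE : ∀ ε : ℝ, 0 < ε →
      IntegrableOn (fun y : Ed d => Real.exp (2 * ε * (inner ℝ y ν : ℝ))) Ξ volume) :
    ∀ R : ℝ, 0 < R → ∀ δ : ℝ, 0 < δ → ∃ ε₀ : ℝ, 0 < ε₀ ∧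
      ∀ ε : ℝ, 0 < ε → ε < ε₀ → ∀ z : Ed d, ‖z‖ ≤ R →
        |Real.exp (ε * (inner ℝ z ν : ℝ)) /
            (∫ y in Ξ, Real.exp (2 * ε * (inner ℝ y ν : ℝ))) *
            (∫ y in {y : Ed d | y ∈ Ξ ∧ z + y ∈ Ξ},
              Real.exp (2 * ε * (inner ℝ y ν : ℝ))) - 1| < δ := by
  intro R hR δ hδ
  obtain ⟨x₂, hx₂⟩ := exists_vadd_subset_of_norm_le h1 h0 hcc R
  obtain ⟨ε₀, hε₀, hsmall⟩ :=
    exists_pos_forall_exp_mul_sub_one_lt (R * ‖ν‖ + 2 * |inner ℝ x₂ ν|) hδ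
  refine ⟨ε₀, hε₀, fun ε hε hεε₀ z hz => ?_⟩
  have hx₂Ξ : x₂ +ᵥ Ξ ⊆ Ξ := by simpa using hx₂ 0 (by simpa using hR.le)
  have hzν : |inner ℝ z ν| ≤ R * ‖ν‖ :=
    (abs_real_inner_le_norm z ν).trans (mul_le_mul_of_nonneg_right hz (norm_nonneg ν))
  calc _ ≤ exp (|ε * inner ℝ z ν| + |2 * ε * inner ℝ x₂ ν|) - 1 :=
        abs_overlap_ratio_sub_one_le hΞo hΞc.nonempty (hE ε hε) hx₂Ξ (hx₂ z hz)
    _ ≤ exp (ε * (R * ‖ν‖ + 2 * |inner ℝ x₂ ν|)) - 1 := by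
        gcongr
        rw [abs_mul, abs_mul, abs_mul, abs_of_pos hε, abs_two]
        nlinarith
    _ < δ := hsmall ε hε hεε₀

/-- with `E_ε(x) = e^{ε x·ν + 2πi x·ξ} χ_Ξ(x)` one has
`lim_{ε→0⁺} e^{ε z·ν} ‖E_ε‖⁻² ∫ e^{2ε y·ν} χ_Ξ(z+y)χ_Ξ(y) dy = 1` uniformly on `|z| ≤ R`.
(Note `‖E_ε‖² = ∫_Ξ e^{2ε y·ν} dy`, independently of `ξ`.) -/
theorem stmt18 {d : ℕ} (Ξt Ξ : Set (Ed d))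
    (hconv : Convex ℝ Ξt) (hopen : IsOpen Ξt)
    (hcc : (interior (charCone Ξt)).Nonempty)
    (hbc : (interior (barrierCone Ξt)).Nonempty)
    (hΞo : IsOpen Ξ) (hΞc : IsConnected Ξ)
    (x₀ x₁ : Ed d) (h1 : x₁ +ᵥ Ξt ⊆ Ξ) (h0 : Ξ ⊆ x₀ +ᵥ Ξt)
    (ν : Ed d) (hν : ν ∈ interior (barrierCone Ξt)) (ξ : Ed d)
    (hE : ∀ ε : ℝ, 0 < ε →
      IntegrableOn (fun y : Ed d => Real.exp (2 * ε * (inner ℝ y ν : ℝ))) Ξ volume) :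
    ∀ R : ℝ, 0 < R → ∀ δ : ℝ, 0 < δ → ∃ ε₀ : ℝ, 0 < ε₀ ∧
      ∀ ε : ℝ, 0 < ε → ε < ε₀ → ∀ z : Ed d, ‖z‖ ≤ R →
        |Real.exp (ε * (inner ℝ z ν : ℝ)) /
            (∫ y in Ξ, Real.exp (2 * ε * (inner ℝ y ν : ℝ))) *
            (∫ y in {y : Ed d | y ∈ Ξ ∧ z + y ∈ Ξ},
              Real.exp (2 * ε * (inner ℝ y ν : ℝ))) - 1| < δ :=
  stmt18_general Ξt Ξ hcc hΞo hΞc x₀ x₁ h1 h0 ν hE
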